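/- arXiv:1308.6397 — 4 statements merged into one kernel-verified Lean document; each statement's English description precedes it below -/
import Mathlib

section
/- For every starting point s ≥ 1 and x > 0, the hitting time M of the Markov chain is finite almost surely: P_{(s,x)}(M < ∞) = 1. -/
open MeasureTheory ProbabilityTheory Real Filter Topology

/-- `tProc E k ω = t_k(ω)`: `t_1 = 0`, `t_{k+1} = t_k + E_k` for `k ≥ 1`. -/
noncomputable def tProc {Ω : Type*} (E : ℕ → Ω → ℝ) (k : ℕ) (ω : Ω) : ℝ :=
  ∑ i ∈ Finset.Ico 1 k, E i ω

/-- `zProc E Y k ω = z_k(ω)`: `z_1 = 1`, `z_{k+1} = z_k + Y_k e^{t_k}` for `k ≥ 1`. -/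
noncomputable def zProc {Ω : Type*} (E Y : ℕ → Ω → ℝ) (k : ℕ) (ω : Ω) : ℝ :=
  1 + ∑ i ∈ Finset.Ico 1 k, Y i ω * Real.exp (tProc E i ω)

/-- The sequences `(E_k)` and `(Y_k)` are mutually independent and i.i.d.,
each exponentially distributed with rate 1. -/
def IsClusterSetup {Ω : Type*} [MeasurableSpace Ω] (P : Measure Ω)
    (E Y : ℕ → Ω → ℝ) : Prop :=
  iIndepFun
      (fun p : Bool × ℕ => cond p.1 (E p.2) (Y p.2)) P ∧
    (∀ k, Measure.map (E k) P = expMeasure 1) ∧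
    (∀ k, Measure.map (Y k) P = expMeasure 1)

/-- `𝒩 := sup {i ≥ 1 : t_i ≤ log z_i}` (as a natural number; junk value `0` on the
null event where the set is unbounded). -/
noncomputable def Nrv {Ω : Type*} (E Y : ℕ → Ω → ℝ) (ω : Ω) : ℕ :=
  sSup {i : ℕ | 1 ≤ i ∧ tProc E i ω ≤ Real.log (zProc E Y i ω)}

/-- `F := log z_{𝒩 + 1}`. -/
noncomputable def Frv {Ω : Type*} (E Y : ℕ → Ω → ℝ) (ω : Ω) : ℝ :=
  Real.log (zProc E Y (Nrv E Y ω + 1) ω)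

/-- `uFun a b z = ∫_0^∞ e^{-zt} t^{a-1} (1+t)^{b-a-1} dt`. -/
noncomputable def uFun (a b z : ℝ) : ℝ :=
  ∫ t in Set.Ioi (0:ℝ), Real.exp (-z * t) * t ^ (a - 1) * (1 + t) ^ (b - a - 1)

/-- The confluent hypergeometric function of the second kind (integral representation,
valid for `a > 0`): `Ψ(a, b; z) = Γ(a)⁻¹ ∫_0^∞ e^{-zt} t^{a-1} (1+t)^{b-a-1} dt`. -/
noncomputable def Psi (a b z : ℝ) : ℝ :=
  (Real.Gamma a)⁻¹ * uFun a b z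

/-- The sequences `(α_k)` (rate-1 exponentials) and `(φ_k)` (uniform on `[0,1]`)
are i.i.d. and mutually independent. -/
def IsChainSetup {Ω : Type*} [MeasurableSpace Ω] (P : Measure Ω)
    (a f : ℕ → Ω → ℝ) : Prop :=
  iIndepFun
      (fun p : Bool × ℕ => cond p.1 (a p.2) (f p.2)) P ∧
    (∀ k, Measure.map (a k) P = expMeasure 1) ∧
    (∀ k, Measure.map (f k) P = volume.restrict (Set.Icc (0:ℝ) 1))

/-- `s_0 := s`, `s_{k+1} := (s_k + α_k) φ_k`. -/
noncomputable def sChain {Ω : Type*} (a f : ℕ → Ω → ℝ) (s : ℝ) (ω : Ω) : ℕ → ℝ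
  | 0 => s
  | k + 1 => (sChain a f s ω k + a k ω) * f k ω

/-- `x_0 := x`, `x_{k+1} := x_k (1 + α_k / s_k)`. -/
noncomputable def xChain {Ω : Type*} (a f : ℕ → Ω → ℝ) (s x : ℝ) (ω : Ω) : ℕ → ℝ
  | 0 => x
  | k + 1 => xChain a f s x ω k * (1 + a k ω / sChain a f s ω k)

/-- `M := min {i > 1 : s_i < 1}` (junk value `0` if no such `i` exists). -/
noncomputable def Mhit {Ω : Type*} (a f : ℕ → Ω → ℝ) (s : ℝ) (ω : Ω) : ℕ :=
  sInf {i : ℕ | 1 < i ∧ sChain a f s ω i < 1}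

/-! On the event that `s_i ≥ 1` for all `i ≥ 2`, the inequality `s_k + α_k ≤ max s_k 1 * (1 + α_k)`
gives `1 ≤ s_n ≤ s (1 + α_0) ∏_{1 ≤ i < n} (1 + α_i) φ_i`. Taking square roots, independence
factorises the expectation of the right-hand side, and `E √(1 + α) ≤ √2`, `E √φ = 2/3` with
`√2 · 2/3 < 1`; by Markov's inequality the event has probability at most `C (2√2/3)^n` for
every `n`. -/

open scoped ENNReal

section Deterministic

variable {Ω : Type*} {a f : ℕ → Ω → ℝ} {s : ℝ} {ω : Ω}

lemma sChain_succ_le_max_mul (k : ℕ) (ha : 0 ≤ a k ω) (hf : 0 ≤ f k ω) :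
    sChain a f s ω (k + 1) ≤ max (sChain a f s ω k) 1 * ((1 + a k ω) * f k ω) := by
  have hsum : sChain a f s ω k + a k ω ≤ max (sChain a f s ω k) 1 * (1 + a k ω) := by
    nlinarith [le_max_left (sChain a f s ω k) 1, le_max_right (sChain a f s ω k) 1]
  calc sChain a f s ω (k + 1) = (sChain a f s ω k + a k ω) * f k ω := rfl
    _ ≤ max (sChain a f s ω k) 1 * (1 + a k ω) * f k ω := mul_le_mul_of_nonneg_right hsum hf
    _ = _ := mul_assoc _ _ _

lemma max_sChain_le_mul_prod (hs : 1 ≤ s) (ha : ∀ k, 0 ≤ a k ω)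
    (hf : ∀ k, f k ω ∈ Set.Icc (0 : ℝ) 1) {n : ℕ} (hn : 1 ≤ n)
    (hstay : ∀ i, 2 ≤ i → i ≤ n → 1 ≤ sChain a f s ω i) :
    max (sChain a f s ω n) 1 ≤ s * (1 + a 0 ω) * ∏ i ∈ Finset.Ico 1 n, (1 + a i ω) * f i ω := by
  induction n, hn using Nat.le_induction with
  | base =>
    have hf0 := hf 0
    have ha0 := ha 0
    simp only [Finset.Ico_self, Finset.prod_empty, mul_one, max_le_iff]
    constructor
    · show (s + a 0 ω) * f 0 ω ≤ s * (1 + a 0 ω)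
      nlinarith [hf0.1, hf0.2]
    · nlinarith
  | succ n hn ih =>
    rw [Finset.prod_Ico_succ_top hn, ← mul_assoc, max_eq_left (hstay (n + 1) (by omega) le_rfl)]
    calc sChain a f s ω (n + 1) ≤ max (sChain a f s ω n) 1 * ((1 + a n ω) * f n ω) :=
          sChain_succ_le_max_mul n (ha n) (hf n).1
      _ ≤ _ := mul_le_mul_of_nonneg_right (ih fun i hi hin => hstay i hi (by omega))
          (mul_nonneg (by linarith [ha n]) (hf n).1)

end Deterministic

lemma lintegral_sqrt_Icc_zero_one :
    ∫⁻ x in Set.Icc (0 : ℝ) 1, ENNReal.ofReal √x = ENNReal.ofReal (2 / 3) := by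
  have hint : IntegrableOn (fun x => √x) (Set.Icc (0 : ℝ) 1) :=
    Real.continuous_sqrt.integrableOn_Icc
  rw [← ofReal_integral_eq_lintegral_ofReal hint (ae_of_all _ fun x => Real.sqrt_nonneg x),
    integral_Icc_eq_integral_Ioc, ← intervalIntegral.integral_of_le zero_le_one]
  simp_rw [Real.sqrt_eq_rpow]
  rw [integral_rpow (Or.inl (by norm_num))]
  norm_num

lemma exponentialPDF_mul_ofReal {r : ℝ} (hr : 0 < r) (x : ℝ) :
    exponentialPDF r x * ENNReal.ofReal x = ENNReal.ofReal r⁻¹ * gammaPDF 2 r x := by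
  rcases lt_or_ge x 0 with hx | hx
  · rw [exponentialPDF_of_neg hx, gammaPDF_of_neg hx, zero_mul, mul_zero]
  · rw [exponentialPDF_of_nonneg hx, gammaPDF_of_nonneg hx, ← ENNReal.ofReal_mul (by positivity),
      ← ENNReal.ofReal_mul (by positivity), Real.Gamma_two]
    congr 1
    norm_num
    field_simp

lemma lintegral_ofReal_expMeasure {r : ℝ} (hr : 0 < r) :
    ∫⁻ x, ENNReal.ofReal x ∂expMeasure r = ENNReal.ofReal r⁻¹ := by
  have hpdf : Measurable (exponentialPDF r) := (measurable_exponentialPDFReal r).ennreal_ofReal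
  change ∫⁻ x, ENNReal.ofReal x ∂volume.withDensity (exponentialPDF r) = _
  rw [lintegral_withDensity_eq_lintegral_mul _ hpdf ENNReal.measurable_ofReal]
  simp_rw [Pi.mul_apply, exponentialPDF_mul_ofReal hr]
  rw [lintegral_const_mul' _ _ ENNReal.ofReal_ne_top, lintegral_gammaPDF_eq_one two_pos hr, mul_one]

-- The tangent line of `√` at `2`, where `E (1 + α) = 2`.
lemma ofReal_sqrt_one_add_le (x : ℝ) :
    ENNReal.ofReal √(1 + x) ≤ ENNReal.ofReal (√2 / 4) * (3 + ENNReal.ofReal x) := by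
  rcases le_or_gt (1 + x) 0 with hx | hx
  · simp [Real.sqrt_eq_zero'.2 hx]
  have h2 : √2 ^ 2 = 2 := Real.sq_sqrt zero_le_two
  calc ENNReal.ofReal √(1 + x) ≤ ENNReal.ofReal (√2 / 4 * (3 + x)) := by
        refine ENNReal.ofReal_le_ofReal (Real.sqrt_le_iff.2 ⟨by nlinarith [Real.sqrt_nonneg 2], ?_⟩)
        nlinarith [sq_nonneg (x - 1)]
    _ ≤ ENNReal.ofReal (√2 / 4) * (3 + ENNReal.ofReal x) := by
        rw [ENNReal.ofReal_mul (by positivity)]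
        gcongr
        exact (ENNReal.ofReal_add_le).trans_eq (by norm_num)

lemma lintegral_sqrt_one_add_expMeasure_one_le :
    ∫⁻ x, ENNReal.ofReal √(1 + x) ∂expMeasure 1 ≤ ENNReal.ofReal √2 := by
  have := isProbabilityMeasure_expMeasure one_pos
  calc ∫⁻ x, ENNReal.ofReal √(1 + x) ∂expMeasure 1
      ≤ ∫⁻ x, ENNReal.ofReal (√2 / 4) * (3 + ENNReal.ofReal x) ∂expMeasure 1 :=
        lintegral_mono ofReal_sqrt_one_add_le
    _ = ENNReal.ofReal (√2 / 4) * 4 := by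
        rw [lintegral_const_mul' _ _ ENNReal.ofReal_ne_top, lintegral_add_left measurable_const,
          lintegral_ofReal_expMeasure one_pos]
        norm_num
    _ = ENNReal.ofReal √2 := by
        rw [← ENNReal.ofReal_ofNat 4, ← ENNReal.ofReal_mul (by positivity)]
        ring_nf

lemma ProbabilityTheory.iIndepFun.lintegral_prod_comp {Ω ι β : Type*} [MeasurableSpace Ω]
    [MeasurableSpace β] {P : Measure Ω} {X : ι → Ω → β} (hX : iIndepFun X P)
    (hXm : ∀ i, AEMeasurable (X i) P) {W : ι → β → ℝ≥0∞} (hW : ∀ i, Measurable (W i))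
    (S : Finset ι) :
    ∫⁻ ω, ∏ i ∈ S, W i (X i ω) ∂P = ∏ i ∈ S, ∫⁻ x, W i x ∂P.map (X i) := by
  set Y : ι → Ω → β := fun i => (hXm i).mk
  have hY : iIndepFun Y P := hX.congr fun i => (hXm i).ae_eq_mk
  calc ∫⁻ ω, ∏ i ∈ S, W i (X i ω) ∂P = ∫⁻ ω, ∏ i ∈ S, W i (Y i ω) ∂P := by
        refine lintegral_congr_ae ?_
        filter_upwards [(Filter.eventually_all_finset S).2 fun i _ => (hXm i).ae_eq_mk]
          with ω hω
        exact Finset.prod_congr rfl fun i hi => by rw [hω i hi]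
    _ = ∏ i ∈ S, ∫⁻ ω, W i (Y i ω) ∂P :=
        lintegral_prod_eq_prod_lintegral_of_indepFun S _ (hY.comp W hW)
          fun i => (hW i).comp (hXm i).measurable_mk
    _ = ∏ i ∈ S, ∫⁻ x, W i x ∂P.map (X i) := by
        refine Finset.prod_congr rfl fun i _ => ?_
        rw [Measure.map_congr (hXm i).ae_eq_mk, lintegral_map (hW i) (hXm i).measurable_mk]

def chainIndex (n : ℕ) : Finset (Bool × ℕ) := insert (true, 0) (Finset.univ ×ˢ Finset.Ico 1 n)

lemma prod_chainIndex {M : Type*} [CommMonoid M] (g : Bool × ℕ → M) (n : ℕ) :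
    ∏ p ∈ chainIndex n, g p = g (true, 0) * ∏ i ∈ Finset.Ico 1 n, g (true, i) * g (false, i) := by
  rw [chainIndex, Finset.prod_insert (by simp), Finset.prod_product_right]
  simp only [Fintype.prod_bool]

-- `(true, k)` indexes `α_k` and `(false, k)` indexes `φ_k`, as in `IsChainSetup`.
noncomputable def sqrtWeight (p : Bool × ℕ) (x : ℝ) : ℝ≥0∞ := ENNReal.ofReal √(cond p.1 (1 + x) x)

lemma measurable_sqrtWeight (p : Bool × ℕ) : Measurable (sqrtWeight p) := by
  rcases p with ⟨_ | _, _⟩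
  · change Measurable fun x => ENNReal.ofReal √x
    fun_prop
  · change Measurable fun x => ENNReal.ofReal √(1 + x)
    fun_prop

lemma one_le_ofReal_sqrt_mul_prod_sqrtWeight {Ω : Type*} {a f : ℕ → Ω → ℝ} {s : ℝ} {ω : Ω}
    (hs : 1 ≤ s) (ha : ∀ k, 0 ≤ a k ω) (hf : ∀ k, f k ω ∈ Set.Icc (0 : ℝ) 1) {n : ℕ}
    (hn : 1 ≤ n) (hstay : ∀ i, 2 ≤ i → i ≤ n → 1 ≤ sChain a f s ω i) :
    1 ≤ ENNReal.ofReal √s *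
      ∏ p ∈ chainIndex n, sqrtWeight p (cond p.1 (a p.2) (f p.2) ω) := by
  set y : Bool × ℕ → ℝ := fun p => cond p.1 (1 + a p.2 ω) (f p.2 ω)
  have hy : ∀ p, 0 ≤ y p := by
    rintro ⟨_ | _, k⟩
    · exact (hf k).1
    · exact add_nonneg zero_le_one (ha k)
  have hbound : 1 ≤ s * ∏ p ∈ chainIndex n, y p := by
    rw [prod_chainIndex, ← mul_assoc]
    exact (le_max_right _ _).trans (max_sChain_le_mul_prod hs ha hf hn hstay)
  calc (1 : ℝ≥0∞) = ENNReal.ofReal √1 := by simp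
    _ ≤ ENNReal.ofReal √(s * ∏ p ∈ chainIndex n, y p) := by gcongr
    _ = ENNReal.ofReal √s * ∏ p ∈ chainIndex n, sqrtWeight p (cond p.1 (a p.2) (f p.2) ω) := by
      rw [Real.sqrt_mul (by linarith), Real.sqrt_prod _ fun p _ => hy p,
        ENNReal.ofReal_mul (Real.sqrt_nonneg _),
        ENNReal.ofReal_prod_of_nonneg fun p _ => Real.sqrt_nonneg _]
      congr 1
      refine Finset.prod_congr rfl fun p _ => ?_
      rcases p with ⟨_ | _, _⟩ <;> rfl

namespace IsChainSetup

variable {Ω : Type*} [MeasurableSpace Ω] {P : Measure Ω} {a f : ℕ → Ω → ℝ}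

lemma aemeasurable_coord (h : IsChainSetup P a f) (p : Bool × ℕ) :
    AEMeasurable (cond p.1 (a p.2) (f p.2)) P := by
  rcases p with ⟨_ | _, k⟩
  · exact .of_map_ne_zero (by simp [h.2.2 k])
  · exact .of_map_ne_zero (h.2.1 k ▸ (isProbabilityMeasure_expMeasure one_pos).ne_zero)

lemma ae_nonneg (h : IsChainSetup P a f) : ∀ᵐ ω ∂P, ∀ k, 0 ≤ a k ω := by
  refine ae_all_iff.2 fun k => ae_of_ae_map (h.aemeasurable_coord (true, k)) ?_
  change ∀ᵐ x ∂P.map (a k), 0 ≤ x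
  rw [h.2.1 k]
  change ∀ᵐ x ∂volume.withDensity (exponentialPDF 1), 0 ≤ x
  rw [ae_withDensity_iff (f := exponentialPDF 1) (measurable_exponentialPDFReal 1).ennreal_ofReal]
  refine ae_of_all _ fun x hx => not_lt.1 fun hneg => hx (exponentialPDF_of_neg hneg)

lemma ae_mem_Icc (h : IsChainSetup P a f) : ∀ᵐ ω ∂P, ∀ k, f k ω ∈ Set.Icc (0 : ℝ) 1 := by
  refine ae_all_iff.2 fun k => ae_of_ae_map (h.aemeasurable_coord (false, k)) ?_
  change ∀ᵐ x ∂P.map (f k), x ∈ Set.Icc (0 : ℝ) 1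
  rw [h.2.2 k]
  exact ae_restrict_mem measurableSet_Icc

lemma lintegral_sqrtWeight_le (h : IsChainSetup P a f) (p : Bool × ℕ) :
    ∫⁻ x, sqrtWeight p x ∂P.map (cond p.1 (a p.2) (f p.2)) ≤
      cond p.1 (ENNReal.ofReal √2) (ENNReal.ofReal (2 / 3)) := by
  rcases p with ⟨_ | _, k⟩
  · exact (h.2.2 k ▸ lintegral_sqrt_Icc_zero_one).le
  · exact h.2.1 k ▸ lintegral_sqrt_one_add_expMeasure_one_le

lemma measure_not_exists_sChain_lt_one_le (h : IsChainSetup P a f) {s : ℝ} (hs : 1 ≤ s) (n : ℕ) :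
    P {ω | ¬∃ i, 1 < i ∧ sChain a f s ω i < 1} ≤
      ENNReal.ofReal √s * ENNReal.ofReal √2 *
        (ENNReal.ofReal √2 * ENNReal.ofReal (2 / 3)) ^ n := by
  set X : Bool × ℕ → Ω → ℝ := fun p => cond p.1 (a p.2) (f p.2)
  set Z : Ω → ℝ≥0∞ := fun ω => ∏ p ∈ chainIndex (n + 1), sqrtWeight p (X p ω)
  have hZ : AEMeasurable Z P := Finset.aemeasurable_fun_prod _ fun p _ =>
    (measurable_sqrtWeight p).comp_aemeasurable (h.aemeasurable_coord p)
  have hsub : {ω | ¬∃ i, 1 < i ∧ sChain a f s ω i < 1} ≤ᵐ[P]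
      {ω | 1 ≤ ENNReal.ofReal √s * Z ω} := by
    filter_upwards [h.ae_nonneg, h.ae_mem_Icc] with ω ha hf hstay
    simp only [not_exists, not_and, not_lt] at hstay
    exact one_le_ofReal_sqrt_mul_prod_sqrtWeight hs ha hf (by omega) fun i hi _ => hstay i hi
  calc P {ω | ¬∃ i, 1 < i ∧ sChain a f s ω i < 1}
      ≤ P {ω | 1 ≤ ENNReal.ofReal √s * Z ω} := measure_mono_ae hsub
    _ ≤ ∫⁻ ω, ENNReal.ofReal √s * Z ω ∂P := by
        simpa using mul_meas_ge_le_lintegral₀ (hZ.const_mul _) 1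
    _ = ENNReal.ofReal √s * ∏ p ∈ chainIndex (n + 1), ∫⁻ x, sqrtWeight p x ∂P.map (X p) := by
        rw [lintegral_const_mul'' _ hZ,
          h.1.lintegral_prod_comp h.aemeasurable_coord measurable_sqrtWeight]
    _ ≤ ENNReal.ofReal √s *
          ∏ p ∈ chainIndex (n + 1), cond p.1 (ENNReal.ofReal √2) (ENNReal.ofReal (2 / 3)) := by
        gcongr with p
        exact h.lintegral_sqrtWeight_le p
    _ = _ := by
        simp only [prod_chainIndex, cond_true, cond_false, Finset.prod_const, Nat.card_Ico,
          add_tsub_cancel_right, mul_assoc]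

end IsChainSetup

theorem stmt11_general {Ω : Type*} [MeasurableSpace Ω] (P : Measure Ω)
    (a f : ℕ → Ω → ℝ) (hsetup : IsChainSetup P a f)
    (s : ℝ) (hs : 1 ≤ s) :
    ∀ᵐ ω ∂P, ∃ i : ℕ, 1 < i ∧ sChain a f s ω i < 1 := by
  have hρ : ENNReal.ofReal √2 * ENNReal.ofReal (2 / 3) < 1 := by
    rw [← ENNReal.ofReal_mul (Real.sqrt_nonneg 2), ENNReal.ofReal_lt_one]
    nlinarith [Real.sq_sqrt (zero_le_two : (0 : ℝ) ≤ 2), Real.sqrt_nonneg 2]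
  have hdecay : Tendsto (fun n : ℕ => ENNReal.ofReal √s * ENNReal.ofReal √2 *
      (ENNReal.ofReal √2 * ENNReal.ofReal (2 / 3)) ^ n) atTop (𝓝 0) := by
    simpa using ENNReal.Tendsto.const_mul (ENNReal.tendsto_pow_atTop_nhds_zero_of_lt_one hρ)
      (Or.inr (ENNReal.mul_ne_top ENNReal.ofReal_ne_top ENNReal.ofReal_ne_top))
  rw [ae_iff]
  exact nonpos_iff_eq_zero.1
    (ge_of_tendsto' hdecay (hsetup.measure_not_exists_sChain_lt_one_le hs))

/-- for every starting point `s ≥ 1`, `x > 0`, the hitting time `M`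
is almost surely finite, i.e. almost surely there is some `i > 1` with `s_i < 1`. -/
theorem stmt11 {Ω : Type*} [MeasurableSpace Ω] (P : Measure Ω) [IsProbabilityMeasure P]
    (a f : ℕ → Ω → ℝ) (hsetup : IsChainSetup P a f)
    (s x : ℝ) (hs : 1 ≤ s) (hx : 0 < x) :
    ∀ᵐ ω ∂P, ∃ i : ℕ, 1 < i ∧ sChain a f s ω i < 1 :=
  stmt11_general P a f hsetup s hs
end

section
/- lim_{x→0⁺} (1/x)·(Ψ(x, 1; 1) − 1) = 0; explicitly, lim_{x→0⁺} (1/x)·(Γ(x)^{-1} ∫_0^∞ e^{-t} t^{x-1} (1+t)^{-x} dt − 1) = 0. (This is the statement ∂_a Ψ(a, 1; 1)|_{a=0} = 0.) -/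
open MeasureTheory Real Filter Topology

/-!
Here `(1/x)(Ψ(x, 1; 1) - 1) = (U(x, 1, 1) - Γ(x)) / (x Γ(x))` and `x Γ(x) = Γ(x + 1) → 1`,
so it suffices that `U(x, 1, 1) - Γ(x) = ∫_0^∞ e^{-t} t^{x-1} ((1+t)^{-x} - 1) dt` tends to `0`.
This is dominated convergence: from `0 ≤ 1 - (1+t)^{-x} ≤ min(1, x t)` the integrand is bounded
by `e^{-t}` for `0 < x ≤ 1`, and it tends pointwise to `e^{-t} t^{-1} (1 - 1) = 0`.
-/

lemma one_sub_rpow_neg_le_mul {x t : ℝ} (hx : 0 ≤ x) (ht : 0 ≤ t) :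
    1 - (1 + t) ^ (-x) ≤ x * t := by
  have hlog : log (1 + t) ≤ t := by linarith [log_le_sub_one_of_pos (by linarith : 0 < 1 + t)]
  have hexp := add_one_le_exp (log (1 + t) * -x)
  rw [← rpow_def_of_pos (by linarith)] at hexp
  nlinarith

lemma rpow_sub_one_mul_one_sub_rpow_neg_le_one {x t : ℝ} (hx₀ : 0 ≤ x) (hx₁ : x ≤ 1)
    (ht : 0 < t) : t ^ (x - 1) * (1 - (1 + t) ^ (-x)) ≤ 1 := by
  have hpos : 0 < (1 + t) ^ (-x) := rpow_pos_of_pos (by linarith) _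
  rcases le_total t 1 with hle | hge
  · calc t ^ (x - 1) * (1 - (1 + t) ^ (-x))
        ≤ t ^ (x - 1) * (x * t) :=
          mul_le_mul_of_nonneg_left (one_sub_rpow_neg_le_mul hx₀ ht.le) (by positivity)
      _ = x * t ^ x := by rw [rpow_sub_one ht.ne']; field_simp
      _ ≤ 1 * 1 := mul_le_mul hx₁ (rpow_le_one ht.le hle hx₀) (by positivity) zero_le_one
      _ = 1 := one_mul 1
  · have : t ^ (x - 1) ≤ 1 := rpow_le_one_of_one_le_of_nonpos hge (by linarith)
    nlinarith [rpow_nonneg ht.le (x - 1)]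

noncomputable def uSubGammaIntegrand (x t : ℝ) : ℝ :=
  exp (-t) * t ^ (x - 1) * ((1 + t) ^ (-x) - 1)

lemma norm_uSubGammaIntegrand_le {x t : ℝ} (hx₀ : 0 ≤ x) (hx₁ : x ≤ 1) (ht : 0 < t) :
    ‖uSubGammaIntegrand x t‖ ≤ exp (-t) := by
  have hle : (1 + t) ^ (-x) ≤ 1 := rpow_le_one_of_one_le_of_nonpos (by linarith) (by linarith)
  rw [uSubGammaIntegrand, norm_mul, norm_mul, norm_of_nonneg (exp_pos _).le,
    norm_of_nonneg (rpow_nonneg ht.le _), Real.norm_of_nonpos (by linarith), neg_sub, mul_assoc]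
  exact mul_le_of_le_one_right (exp_pos _).le
    (rpow_sub_one_mul_one_sub_rpow_neg_le_one hx₀ hx₁ ht)

lemma continuousOn_uSubGammaIntegrand (x : ℝ) :
    ContinuousOn (uSubGammaIntegrand x) (Set.Ioi 0) := by
  intro t (ht : 0 < t)
  unfold uSubGammaIntegrand
  fun_prop (disch := first | exact ht.ne' | exact Or.inl (by positivity))

lemma uFun_sub_Gamma_eq_integral {x : ℝ} (hx : 0 < x) :
    uFun x 1 1 - Gamma x = ∫ t in Set.Ioi 0, uSubGammaIntegrand x t := by
  have hΓ := GammaIntegral_convergent hx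
  have hU : IntegrableOn (fun t ↦ exp (-t) * t ^ (x - 1) * (1 + t) ^ (-x)) (Set.Ioi 0) := by
    refine hΓ.mono' ?_ (ae_restrict_of_forall_mem measurableSet_Ioi fun t (ht : 0 < t) ↦ ?_)
    · refine ContinuousOn.aestronglyMeasurable (fun t (ht : 0 < t) ↦ ?_) measurableSet_Ioi
      fun_prop (disch := first | exact ht.ne' | exact Or.inl (by positivity))
    · rw [norm_mul, norm_of_nonneg (by positivity), norm_of_nonneg (by positivity)]
      exact mul_le_of_le_one_right (by positivity)
        (rpow_le_one_of_one_le_of_nonpos (by linarith) (by linarith))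
  rw [Gamma_eq_integral hx, uFun]
  simp only [neg_one_mul, sub_sub_cancel_left]
  rw [← integral_sub hU hΓ]
  refine setIntegral_congr_fun measurableSet_Ioi fun t _ ↦ ?_
  simp only [uSubGammaIntegrand]
  ring

lemma tendsto_uFun_sub_Gamma_nhdsGT_zero :
    Tendsto (fun x ↦ uFun x 1 1 - Gamma x) (𝓝[>] 0) (𝓝 0) := by
  have hlim : Tendsto (fun x ↦ ∫ t in Set.Ioi 0, uSubGammaIntegrand x t) (𝓝[>] 0)
      (𝓝 (∫ t in Set.Ioi 0, uSubGammaIntegrand 0 t)) := by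
    refine tendsto_integral_filter_of_dominated_convergence (fun t ↦ exp (-t))
      (Eventually.of_forall fun x ↦
        (continuousOn_uSubGammaIntegrand x).aestronglyMeasurable measurableSet_Ioi)
      ?_ (integrableOn_exp_neg_Ioi 0) ?_
    · filter_upwards [Ioo_mem_nhdsGT zero_lt_one] with x ⟨hx₀, hx₁⟩
      exact ae_restrict_of_forall_mem measurableSet_Ioi fun t ht ↦
        norm_uSubGammaIntegrand_le hx₀.le hx₁.le ht
    · refine ae_restrict_of_forall_mem measurableSet_Ioi fun t (ht : 0 < t) ↦ ?_
      refine (ContinuousAt.tendsto ?_).mono_left nhdsWithin_le_nhds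
      unfold uSubGammaIntegrand
      fun_prop (disch := first | exact ht.ne' | positivity)
  simp only [uSubGammaIntegrand, neg_zero, rpow_zero, sub_self, mul_zero, integral_zero] at hlim
  exact hlim.congr' (eventually_nhdsWithin_of_forall fun x hx ↦
    (uFun_sub_Gamma_eq_integral hx).symm)

lemma tendsto_self_mul_Gamma_nhdsGT_zero :
    Tendsto (fun x ↦ x * Gamma x) (𝓝[>] 0) (𝓝 1) := by
  have hΓ : ContinuousAt Gamma 1 :=
    (differentiableAt_Gamma fun m ↦ by linarith [m.cast_nonneg (α := ℝ)]).continuousAt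
  have h : Tendsto (fun x ↦ Gamma (x + 1)) (𝓝 0) (𝓝 (Gamma 1)) :=
    hΓ.tendsto.comp ((continuous_add_const 1).tendsto' 0 1 (zero_add 1))
  rw [Gamma_one] at h
  exact (h.mono_left nhdsWithin_le_nhds).congr'
    (eventually_nhdsWithin_of_forall fun x hx ↦ Gamma_add_one (ne_of_gt hx))

/-- `lim_{x → 0⁺} (1/x)(Ψ(x, 1; 1) - 1) = 0`,
i.e. `∂ₐΨ(a, 1; 1)|_{a=0} = 0`. -/
theorem stmt16 :
    Tendsto (fun x : ℝ => (1/x) * (Psi x 1 1 - 1)) (nhdsWithin 0 (Set.Ioi 0)) (nhds 0) := by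
  have h := (tendsto_self_mul_Gamma_nhdsGT_zero.inv₀ one_ne_zero).mul
    tendsto_uFun_sub_Gamma_nhdsGT_zero
  rw [mul_zero] at h
  refine h.congr' (eventually_nhdsWithin_of_forall fun x (hx : 0 < x) ↦ ?_)
  have hΓ : Gamma x ≠ 0 := (Gamma_pos_of_pos hx).ne'
  simp only [Psi]
  field_simp
end

section
/- lim_{x→0⁺} (1/x)·(Ψ(x, 0; 1) − 1) = −∫_0^∞ e^{-t} (1+t)^{-1} dt; explicitly, lim_{x→0⁺} (1/x)·(Γ(x)^{-1} ∫_0^∞ e^{-t} t^{x-1} (1+t)^{-x-1} dt − 1) = −∫_0^∞ e^{-t} (1+t)^{-1} dt. (This is the statement ∂_a Ψ(a, 0; 1)|_{a=0} = −∫_0^∞ e^{-t}(1+t)^{-1} dt.) -/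
open MeasureTheory Real Filter Topology

open Set

/-!
Since `Γ(x) = ∫₀^∞ e^{-t} t^{x-1} dt`, we have
`(Ψ(x, 0; 1) - 1) / x = (x Γ(x))⁻¹ ∫₀^∞ e^{-t} t^{x-1} ((1+t)^{-x-1} - 1) dt`,
and `x Γ(x) = Γ(x+1) → 1`.
By Bernoulli's inequality `0 ≤ 1 - (1+t)^{-x-1} ≤ (x+1) t / (1+t)`, which cancels the singularity
of `t^{x-1}` at `0`: for `0 < x ≤ 1` the integrand is bounded by `2 e^{-t}`, and dominated
convergence lets `x → 0⁺` under the integral, giving `∫₀^∞ e^{-t} t⁻¹ ((1+t)⁻¹ - 1) dt`.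
-/

lemma one_sub_one_add_rpow_neg_le {s t : ℝ} (hs : 1 ≤ s) (ht : 0 ≤ t) :
    1 - (1 + t) ^ (-s) ≤ s * t / (1 + t) := by
  have h1t : 0 < 1 + t := by linarith
  have hbase : (1 + t)⁻¹ = 1 + -(t / (1 + t)) := by field_simp; ring
  have hle : -1 ≤ -(t / (1 + t)) := by
    rw [neg_le_neg_iff, div_le_one h1t]; linarith
  have hbern := one_add_mul_self_le_rpow_one_add hle hs
  rw [← hbase, inv_rpow h1t.le, ← rpow_neg h1t.le] at hbern
  rw [mul_div_assoc]
  linarith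

lemma rpow_sub_one_mul_one_sub_one_add_rpow_le_two {x t : ℝ} (hx : 0 < x) (hx1 : x ≤ 1)
    (ht : 0 < t) : t ^ (x - 1) * (1 - (1 + t) ^ (-x - 1)) ≤ 2 := by
  have h1t : 0 < 1 + t := by linarith
  have htx : t ^ x ≤ 1 + t :=
    calc t ^ x ≤ (1 + t) ^ x := rpow_le_rpow ht.le (by linarith) hx.le
      _ ≤ (1 + t) ^ (1 : ℝ) := rpow_le_rpow_of_exponent_le (by linarith) hx1
      _ = 1 + t := rpow_one _
  have hbern := one_sub_one_add_rpow_neg_le (s := x + 1) (by linarith) ht.le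
  rw [neg_add'] at hbern
  calc t ^ (x - 1) * (1 - (1 + t) ^ (-x - 1))
      ≤ t ^ (x - 1) * ((x + 1) * t / (1 + t)) :=
        mul_le_mul_of_nonneg_left hbern (rpow_nonneg ht.le _)
    _ = (x + 1) * (t ^ x / (1 + t)) := by
        rw [rpow_sub_one ht.ne']; field_simp
    _ ≤ 2 * 1 := by
        gcongr
        · linarith
        · exact (div_le_one h1t).mpr htx
    _ = 2 := mul_one 2

lemma integrableOn_exp_neg_mul_rpow_mul_one_add_rpow {a b : ℝ} (ha : 0 < a)
    (hb : b ≤ a + 1) :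
    IntegrableOn (fun t => exp (-t) * t ^ (a - 1) * (1 + t) ^ (b - a - 1)) (Ioi 0) := by
  refine (GammaIntegral_convergent ha).mono' (by fun_prop) ?_
  filter_upwards [ae_restrict_mem measurableSet_Ioi] with t (ht : 0 < t)
  have hle : (1 + t) ^ (b - a - 1) ≤ 1 :=
    rpow_le_one_of_one_le_of_nonpos (by linarith) (by linarith)
  rw [norm_of_nonneg (by positivity)]
  calc exp (-t) * t ^ (a - 1) * (1 + t) ^ (b - a - 1) ≤ exp (-t) * t ^ (a - 1) * 1 := by gcongr
    _ = exp (-t) * t ^ (a - 1) := mul_one _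

lemma uFun_one_sub_Gamma {a b : ℝ} (ha : 0 < a) (hb : b ≤ a + 1) :
    uFun a b 1 - Gamma a =
      ∫ t in Ioi 0, exp (-t) * t ^ (a - 1) * ((1 + t) ^ (b - a - 1) - 1) := by
  rw [Gamma_eq_integral ha, uFun, ← integral_sub _ (GammaIntegral_convergent ha)]
  · refine setIntegral_congr_fun measurableSet_Ioi fun t _ => ?_
    simp only [neg_one_mul]; ring
  · simpa only [neg_one_mul, IntegrableOn] using
      integrableOn_exp_neg_mul_rpow_mul_one_add_rpow ha hb

lemma tendsto_uFun_zero_one_sub_Gamma :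
    Tendsto (fun x => uFun x 0 1 - Gamma x) (𝓝[>] 0)
      (𝓝 (-∫ t in Ioi 0, exp (-t) * (1 + t)⁻¹)) := by
  have hlim : (∫ t in Ioi 0, exp (-t) * t ^ ((0 : ℝ) - 1) * ((1 + t) ^ ((0 : ℝ) - 0 - 1) - 1)) =
      -∫ t in Ioi 0, exp (-t) * (1 + t)⁻¹ := by
    rw [← integral_neg]
    refine setIntegral_congr_fun measurableSet_Ioi fun t (ht : 0 < t) => ?_
    have : 1 + t ≠ 0 := by linarith
    simp only [zero_sub, sub_zero, rpow_neg_one]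
    field_simp
    ring
  rw [← hlim]
  refine Tendsto.congr' (eventually_nhdsWithin_of_forall fun x (hx : 0 < x) =>
    (uFun_one_sub_Gamma hx (by linarith)).symm) ?_
  refine tendsto_integral_filter_of_dominated_convergence (fun t => 2 * exp (-t))
    (Eventually.of_forall fun x => by fun_prop) ?_ ((integrableOn_exp_neg_Ioi 0).const_mul 2) ?_
  · filter_upwards [Ioc_mem_nhdsGT zero_lt_one] with x ⟨hx0, hx1⟩
    filter_upwards [ae_restrict_mem measurableSet_Ioi] with t (ht : 0 < t)
    have hle : (1 + t) ^ (0 - x - 1) ≤ 1 :=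
      rpow_le_one_of_one_le_of_nonpos (by linarith) (by linarith)
    rw [norm_mul, norm_mul, norm_of_nonneg (exp_pos _).le, norm_of_nonneg (rpow_nonneg ht.le _),
      norm_of_nonpos (by linarith), neg_sub, zero_sub, mul_assoc, mul_comm 2]
    gcongr
    exact rpow_sub_one_mul_one_sub_one_add_rpow_le_two hx0 hx1 ht
  · filter_upwards [ae_restrict_mem measurableSet_Ioi] with t (ht : 0 < t)
    have hcont : ContinuousAt
        (fun x : ℝ => exp (-t) * t ^ (x - 1) * ((1 + t) ^ (0 - x - 1) - 1)) 0 := by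
      fun_prop (disch := positivity)
    exact hcont.tendsto.mono_left nhdsWithin_le_nhds

lemma tendsto_self_mul_Gamma_nhdsNE_zero : Tendsto (fun x => x * Gamma x) (𝓝[≠] 0) (𝓝 1) := by
  have hcont : ContinuousAt (fun x => Gamma (x + 1)) 0 :=
    ContinuousAt.comp (g := Gamma)
      ((differentiableOn_Gamma_Ioi.differentiableAt (by simp [Ioi_mem_nhds])).continuousAt)
      (by fun_prop)
  rw [continuousAt_iff_punctured_nhds, zero_add, Gamma_one] at hcont
  exact hcont.congr' (eventually_nhdsWithin_of_forall fun x hx => Gamma_add_one hx)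

/-- `lim_{x → 0⁺} (1/x)(Ψ(x, 0; 1) - 1) = -∫_0^∞ e^{-t}(1+t)^{-1} dt`,
i.e. `∂ₐΨ(a, 0; 1)|_{a=0} = -∫_0^∞ e^{-t}(1+t)^{-1} dt`. -/
theorem stmt17 :
    Tendsto (fun x : ℝ => (1/x) * (Psi x 0 1 - 1)) (nhdsWithin 0 (Set.Ioi 0))
      (nhds (-∫ t in Set.Ioi (0:ℝ), Real.exp (-t) * (1 + t)⁻¹)) := by
  have hΓ : Tendsto (fun x => x * Gamma x) (𝓝[>] 0) (𝓝 1) :=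
    tendsto_self_mul_Gamma_nhdsNE_zero.mono_left (nhdsWithin_mono _ fun x hx => ne_of_gt hx)
  have h := (hΓ.inv₀ one_ne_zero).mul tendsto_uFun_zero_one_sub_Gamma
  rw [inv_one, one_mul] at h
  refine h.congr' ?_
  filter_upwards [self_mem_nhdsWithin] with x (hx : 0 < x)
  have := (Gamma_pos_of_pos hx).ne'
  rw [Psi]
  field_simp
end

section
/- For every z > 0 and b ∈ ℝ, lim_{a→0⁺} Ψ(a, b; z) = 1; explicitly, lim_{a→0⁺} Γ(a)^{-1} ∫_0^∞ e^{-zt} t^{a-1} (1+t)^{b-a-1} dt = 1. (This justifies the special value Ψ(0, b; z) = 1.) -/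
/-!
Near `t = 0` the kernel `e^{-zt} (1+t)^{b-a-1}` differs from `e^{-t}` by `O(t)`, uniformly in
`a ∈ (0, 1]`, and this factor `t` cancels the singularity of `t^{a-1}`; for `t > 1` both integrands
are dominated independently of `a`. Hence the integral stays within a bounded distance of
`Γ(a) = ∫_0^∞ e^{-t} t^{a-1} dt` as `a → 0⁺`, while `Γ(a) → ∞`, so their quotient tends to `1`.
-/

open MeasureTheory Real Filter Topology

open Set Asymptotics

lemma abs_exp_sub_exp_le (x y : ℝ) : |exp x - exp y| ≤ exp (max x y) * |x - y| := by
  wlog hyx : y ≤ x generalizing x y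
  · rw [abs_sub_comm, max_comm, abs_sub_comm x]
    exact this y x (le_of_not_ge hyx)
  have htangent : exp x * (1 + (y - x)) ≤ exp y := by
    calc exp x * (1 + (y - x)) ≤ exp x * exp (y - x) := by
          gcongr; linarith [add_one_le_exp (y - x)]
      _ = exp y := by rw [← exp_add]; ring_nf
  rw [max_eq_left hyx, abs_of_nonneg (sub_nonneg.2 (exp_le_exp.2 hyx)),
    abs_of_nonneg (sub_nonneg.2 hyx)]
  nlinarith

lemma abs_exp_neg_mul_mul_one_add_rpow_sub_exp_neg_le {z c C t : ℝ} (hz : 0 ≤ z)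
    (hc : |c| ≤ C) (ht₀ : 0 ≤ t) (ht₁ : t ≤ 1) :
    |exp (-z * t) * (1 + t) ^ c - exp (-t)| ≤ exp C * (|1 - z| + C) * t := by
  have hlog₀ : 0 ≤ log (1 + t) := log_nonneg (by linarith)
  have hlog : log (1 + t) ≤ t := by linarith [log_le_sub_one_of_pos (by linarith : 0 < 1 + t)]
  have hclog : |log (1 + t) * c| ≤ C * t := by
    rw [abs_mul, abs_of_nonneg hlog₀, mul_comm]
    exact mul_le_mul hc hlog hlog₀ ((abs_nonneg c).trans hc)
  have hC : 0 ≤ C := (abs_nonneg c).trans hc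
  rw [rpow_def_of_pos (by linarith), ← exp_add, mul_assoc]
  refine (abs_exp_sub_exp_le _ _).trans
    (mul_le_mul (exp_le_exp.2 (max_le ?_ (by linarith))) ?_ (abs_nonneg _) (exp_pos _).le)
  · nlinarith [le_abs_self (log (1 + t) * c)]
  · calc |-z * t + log (1 + t) * c - -t| = |(1 - z) * t + log (1 + t) * c| := by ring_nf
      _ ≤ |1 - z| * t + C * t := by
          refine (abs_add_le _ _).trans (add_le_add ?_ hclog)
          rw [abs_mul, abs_of_nonneg ht₀]
      _ = (|1 - z| + C) * t := by ring

lemma integrableOn_exp_neg_mul_mul_one_add_rpow {z : ℝ} (hz : 0 < z) (c : ℝ) :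
    IntegrableOn (fun t => exp (-z * t) * (1 + t) ^ c) (Ioi 0) := by
  refine integrable_of_isBigO_exp_neg (half_pos hz) ?_ ?_
  · exact (continuous_exp.comp (continuous_const.mul continuous_id)).continuousOn.mul
      ((continuous_const.add continuous_id).continuousOn.rpow_const
        fun t (ht : 0 ≤ t) => Or.inl (by linarith : (0 : ℝ) < 1 + t).ne')
  · have hpow : (fun t : ℝ => (1 + t) ^ c) =O[atTop] fun t => exp (z / 2 * t) := by
      refine ((isLittleO_rpow_exp_pos_mul_atTop c (half_pos hz)).isBigO.comp_tendsto
        (tendsto_atTop_add_const_left _ 1 tendsto_id)).trans ?_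
      refine ((isBigO_refl (fun t => exp (z / 2 * t)) atTop).const_mul_left
        (exp (z / 2))).congr_left fun t => ?_
      simp only [Function.comp_apply, id, ← exp_add]; ring_nf
    refine ((isBigO_refl (fun t => exp (-z * t)) atTop).mul hpow).congr_right fun t => ?_
    rw [← exp_add]; ring_nf

lemma tendsto_Gamma_nhdsGT_zero : Tendsto Gamma (𝓝[>] 0) atTop := by
  have hGamma_succ : Tendsto (fun a => Gamma (a + 1)) (𝓝[>] 0) (𝓝 1) := by
    have hcont : ContinuousAt Gamma 1 :=
      (differentiableAt_Gamma fun m => by linarith [(m.cast_nonneg : (0 : ℝ) ≤ m)]).continuousAt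
    simpa [Gamma_one, Function.comp_def] using
      (hcont.tendsto.comp ((continuous_add_const (1 : ℝ)).tendsto' 0 1 (zero_add 1))).mono_left
        nhdsWithin_le_nhds
  refine (hGamma_succ.pos_mul_atTop one_pos tendsto_inv_nhdsGT_zero).congr' ?_
  filter_upwards [self_mem_nhdsWithin] with a (ha : 0 < a)
  rw [Gamma_add_one ha.ne', mul_comm a, mul_assoc, mul_inv_cancel₀ ha.ne', mul_one]

lemma tendsto_inv_mul_nhds_one_of_isBoundedUnder_sub {α : Type*} {l : Filter α} {f g : α → ℝ}
    (hg : Tendsto g l atTop) (hfg : IsBoundedUnder (· ≤ ·) l fun x => ‖f x - g x‖) :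
    Tendsto (fun x => (g x)⁻¹ * f x) l (𝓝 1) := by
  have hsmall : Tendsto (fun x => (g x)⁻¹ * (f x - g x)) l (𝓝 0) :=
    (tendsto_inv_atTop_zero.comp hg).zero_mul_isBoundedUnder_le hfg
  have hone : Tendsto (fun x => 1 + (g x)⁻¹ * (f x - g x)) l (𝓝 1) := by
    simpa using hsmall.const_add 1
  refine hone.congr' ?_
  filter_upwards [hg.eventually_gt_atTop 0] with x hx
  rw [mul_sub, inv_mul_cancel₀ hx.ne']; ring

noncomputable def uFunGammaMajorant (b z t : ℝ) : ℝ :=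
  (Ioc 0 1).indicator (fun _ => exp (|b| + 2) * (|1 - z| + (|b| + 2))) t +
    (exp (-z * t) * (1 + t) ^ |b| + exp (-t))

lemma integrableOn_uFunGammaMajorant {z : ℝ} (hz : 0 < z) (b : ℝ) :
    IntegrableOn (uFunGammaMajorant b z) (Ioi 0) :=
  ((integrableOn_const measure_Ioc_lt_top.ne).integrable_indicator
    measurableSet_Ioc).integrableOn.add
    ((integrableOn_exp_neg_mul_mul_one_add_rpow hz |b|).add (integrableOn_exp_neg_Ioi 0))

section Integrand

variable {a b z t : ℝ}

lemma abs_uFun_integrand_sub_Gamma_integrand_le_of_le_one (hz : 0 ≤ z) (ha : a ∈ Ioc 0 1)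
    (ht : t ∈ Ioc 0 1) :
    |exp (-z * t) * t ^ (a - 1) * (1 + t) ^ (b - a - 1) - exp (-t) * t ^ (a - 1)| ≤
      exp (|b| + 2) * (|1 - z| + (|b| + 2)) := by
  obtain ⟨ha₀, ha₁⟩ := ha
  obtain ⟨ht₀, ht₁⟩ := ht
  have hc : |b - a - 1| ≤ |b| + 2 := by
    rw [abs_le]; constructor <;> linarith [neg_abs_le b, le_abs_self b]
  have hdiff := abs_exp_neg_mul_mul_one_add_rpow_sub_exp_neg_le hz hc ht₀.le ht₁
  set K := exp (|b| + 2) * (|1 - z| + (|b| + 2))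
  have hK : 0 ≤ K := by positivity
  calc |exp (-z * t) * t ^ (a - 1) * (1 + t) ^ (b - a - 1) - exp (-t) * t ^ (a - 1)|
      = |t ^ (a - 1) * (exp (-z * t) * (1 + t) ^ (b - a - 1) - exp (-t))| := by ring_nf
    _ = t ^ (a - 1) * |exp (-z * t) * (1 + t) ^ (b - a - 1) - exp (-t)| := by
        rw [abs_mul, abs_of_pos (rpow_pos_of_pos ht₀ _)]
    _ ≤ t ^ (a - 1) * (K * t) := by gcongr
    _ = K * t ^ a := by rw [mul_left_comm, ← rpow_add_one ht₀.ne']; ring_nf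
    _ ≤ K := mul_le_of_le_one_right hK (rpow_le_one ht₀.le ht₁ ha₀.le)

lemma abs_uFun_integrand_sub_Gamma_integrand_le_of_one_lt (ha : a ∈ Ioc 0 1) (ht : 1 < t) :
    |exp (-z * t) * t ^ (a - 1) * (1 + t) ^ (b - a - 1) - exp (-t) * t ^ (a - 1)| ≤
      exp (-z * t) * (1 + t) ^ |b| + exp (-t) := by
  obtain ⟨ha₀, ha₁⟩ := ha
  have hpow : t ^ (a - 1) ≤ 1 := rpow_le_one_of_one_le_of_nonpos ht.le (by linarith)
  refine (abs_sub _ _).trans (add_le_add ?_ ?_)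
  · rw [abs_of_nonneg (by positivity)]
    calc exp (-z * t) * t ^ (a - 1) * (1 + t) ^ (b - a - 1)
        ≤ exp (-z * t) * 1 * (1 + t) ^ |b| := by
          gcongr
          · linarith
          · linarith [le_abs_self b]
      _ = exp (-z * t) * (1 + t) ^ |b| := by ring
  · rw [abs_of_nonneg (by positivity)]
    exact mul_le_of_le_one_right (exp_pos _).le hpow

lemma abs_uFun_integrand_sub_Gamma_integrand_le_majorant (hz : 0 ≤ z) (ha : a ∈ Ioc 0 1)
    (ht : 0 < t) :
    |exp (-z * t) * t ^ (a - 1) * (1 + t) ^ (b - a - 1) - exp (-t) * t ^ (a - 1)| ≤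
      uFunGammaMajorant b z t := by
  have htail : 0 ≤ exp (-z * t) * (1 + t) ^ |b| + exp (-t) := by positivity
  rcases le_or_gt t 1 with ht₁ | ht₁
  · rw [uFunGammaMajorant, indicator_of_mem (show t ∈ Ioc 0 1 from ⟨ht, ht₁⟩)]
    linarith [abs_uFun_integrand_sub_Gamma_integrand_le_of_le_one (b := b) hz ha ⟨ht, ht₁⟩]
  · rw [uFunGammaMajorant, indicator_of_notMem (fun h => ht₁.not_ge h.2), zero_add]
    exact abs_uFun_integrand_sub_Gamma_integrand_le_of_one_lt ha ht₁

lemma abs_uFun_sub_Gamma_le (hz : 0 < z) (ha : a ∈ Ioc 0 1) :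
    |uFun a b z - Gamma a| ≤ ∫ t in Ioi 0, uFunGammaMajorant b z t := by
  have hbound : ∀ᵐ t ∂volume.restrict (Ioi 0),
      ‖exp (-z * t) * t ^ (a - 1) * (1 + t) ^ (b - a - 1) - exp (-t) * t ^ (a - 1)‖ ≤
        uFunGammaMajorant b z t :=
    (ae_restrict_iff' measurableSet_Ioi).2 <| .of_forall fun t ht =>
      abs_uFun_integrand_sub_Gamma_integrand_le_majorant hz.le ha ht
  have hGamma := GammaIntegral_convergent ha.1
  have hdiff : IntegrableOn
      (fun t => exp (-z * t) * t ^ (a - 1) * (1 + t) ^ (b - a - 1) - exp (-t) * t ^ (a - 1))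
      (Ioi 0) := by
    refine (integrableOn_uFunGammaMajorant hz b).mono' (ContinuousOn.aestronglyMeasurable ?_
      measurableSet_Ioi) hbound
    fun_prop (disch := intros; simp_all; positivity)
  have hU : IntegrableOn (fun t => exp (-z * t) * t ^ (a - 1) * (1 + t) ^ (b - a - 1)) (Ioi 0) := by
    simpa only [Pi.add_def, sub_add_cancel] using hdiff.add hGamma
  rw [uFun, Gamma_eq_integral ha.1, ← integral_sub hU hGamma, ← Real.norm_eq_abs]
  exact norm_integral_le_of_norm_le (integrableOn_uFunGammaMajorant hz b) hbound

end Integrand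

/-- for every `z > 0` and `b ∈ ℝ`, `lim_{a → 0⁺} Ψ(a, b; z) = 1`. -/
theorem stmt18 (z : ℝ) (hz : 0 < z) (b : ℝ) :
    Tendsto (fun a : ℝ => Psi a b z) (nhdsWithin 0 (Set.Ioi 0)) (nhds 1) := by
  have hbdd : IsBoundedUnder (· ≤ ·) (𝓝[>] 0) fun a => ‖uFun a b z - Gamma a‖ :=
    ⟨_, eventually_map.2 <| by
      filter_upwards [Ioc_mem_nhdsGT one_pos] with a ha using abs_uFun_sub_Gamma_le hz ha⟩
  exact tendsto_inv_mul_nhds_one_of_isBoundedUnder_sub tendsto_Gamma_nhdsGT_zero hbdd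
end
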